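/- arXiv:2102.10658 — 6 statements merged into one kernel-verified Lean document; each statement's English description precedes it below -/
import Mathlib

section
/- For every y₂₀ ≤ −δ there exists a unique y₂₁ ∈ (−δ, δ) with φ(y₂₁) = −2 − φ(y₂₀); moreover −1 < φ(y₂₁) ≤ μ_s/μ_d − 2, with equality φ(y₂₁) = μ_s/μ_d − 2 if and only if y₂₀ = −δ. (This is the well-definedness of the singular return map G₋ from the repelling sheet C_r^− to the attracting sheet C_a.) -/
open Real Set Filter Topology

/-- well-definedness of the singular return map `G₋`: for every `y₂₀ ≤ -δ`
there is a unique `y₂₁ ∈ (-δ, δ)` with `φ y₂₁ = -2 - φ y₂₀`; moreover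
`-1 < φ y₂₁ ≤ μs/μd - 2`, with equality iff `y₂₀ = -δ`. -/
theorem stmt_3 (δ μd μs : ℝ) (φ : ℝ → ℝ)
    (hδ : 0 < δ) (hμd : 0 < μd) (hμ : μd < μs) (hratio : 1 < μs / μd)
    (hφ : ContDiff ℝ (⊤ : ℕ∞) φ)
    (hA1p : Tendsto φ atTop (𝓝 1)) (hA1m : Tendsto φ atBot (𝓝 (-1)))
    (hA2 : ∀ s, φ (-s) = -φ s)
    (hA3₁ : ∀ s, 0 < deriv φ s ↔ s ∈ Ioo (-δ) δ)
    (hA3₂ : deriv φ δ = 0) (hA3₃ : φ δ = μs / μd)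
    (hA3₄ : deriv (deriv φ) δ < 0)
    (k : ℕ) (s₀ : ℝ) (hs₀ : 0 < s₀) (φm : ℝ → ℝ)
    (hφm : ContDiffOn ℝ (⊤ : ℕ∞) φm (Icc 0 s₀)) (hφm0 : 0 < φm 0)
    (hA4 : ∀ s ∈ Ioc (0:ℝ) s₀, φ (-(1/s)) = -1 - s ^ k * φm s) :
    ∀ y₂₀, y₂₀ ≤ -δ →
      (∃! y₂₁, y₂₁ ∈ Ioo (-δ) δ ∧ φ y₂₁ = -2 - φ y₂₀) ∧
      (∀ y₂₁, y₂₁ ∈ Ioo (-δ) δ → φ y₂₁ = -2 - φ y₂₀ →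
        -1 < φ y₂₁ ∧ φ y₂₁ ≤ μs / μd - 2 ∧ (φ y₂₁ = μs / μd - 2 ↔ y₂₀ = -δ)) := by
  have contφ : Continuous φ := hφ.continuous
  have diffφ : Differentiable ℝ φ := hφ.differentiable (by simp)
  have anti : AntitoneOn φ (Ici δ) := by
    apply antitoneOn_of_deriv_nonpos (convex_Ici δ) contφ.continuousOn
      (fun x _ => (diffφ x).differentiableWithinAt)
    intro x hx
    rw [interior_Ici] at hx
    by_contra h
    push_neg at h
    have h2 := ((hA3₁ x).mp h).2
    have h3 := mem_Ioi.mp hx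
    linarith
  have mono : StrictMonoOn φ (Icc (-δ) δ) :=
    strictMonoOn_of_deriv_pos (convex_Icc _ _) contφ.continuousOn
      (fun x hx => (hA3₁ x).mpr (by rwa [interior_Icc] at hx))
  -- φ is strictly greater than 1 on [δ, ∞)
  have hgt1 : ∀ z, δ ≤ z → 1 < φ z := by
    intro z hz
    have hz0 : 0 < z := lt_of_lt_of_le hδ hz
    have hF : (𝓝[Ioc (0:ℝ) s₀] 0).NeBot :=
      mem_closure_iff_nhdsWithin_neBot.mp
        (by rw [closure_Ioc hs₀.ne]; exact left_mem_Icc.mpr hs₀.le)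
    have hev1 : ∀ᶠ s in 𝓝[Ioc (0:ℝ) s₀] 0, 0 < φm s := by
      have hc : ContinuousWithinAt φm (Icc 0 s₀) 0 :=
        hφm.continuousOn 0 (left_mem_Icc.mpr hs₀.le)
      exact (hc.eventually (eventually_gt_nhds hφm0)).filter_mono
        (nhdsWithin_mono 0 Ioc_subset_Icc_self)
    have hev2 : ∀ᶠ s in 𝓝[Ioc (0:ℝ) s₀] 0, s < 1 / z :=
      (eventually_lt_nhds (by positivity : (0:ℝ) < 1 / z)).filter_mono nhdsWithin_le_nhds
    have hev3 : ∀ᶠ s in 𝓝[Ioc (0:ℝ) s₀] 0, s ∈ Ioc (0:ℝ) s₀ := eventually_mem_nhdsWithin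
    obtain ⟨s, hs1, hs2, hs3⟩ := (hev1.and (hev2.and hev3)).exists
    have hspos : 0 < s := hs3.1
    have hφ1s : φ (1/s) = 1 + s ^ k * φm s := by
      have h4 := hA4 s hs3
      have h2 := hA2 (1/s)
      linarith
    have hz1s : z < 1 / s := by
      rw [lt_div_iff₀ hspos]
      have := (lt_div_iff₀ hz0).mp hs2
      linarith
    have hle := anti (mem_Ici.mpr hz) (mem_Ici.mpr (hz.trans hz1s.le)) hz1s.le
    have hpos : (0:ℝ) < s ^ k * φm s := mul_pos (pow_pos hspos k) hs1
    linarith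
  -- φ is strictly below φ δ on (δ, ∞)
  have hlt : ∀ z, δ < z → φ z < φ δ := by
    intro z hz
    rcases lt_or_eq_of_le (anti (mem_Ici.mpr le_rfl) (mem_Ici.mpr hz.le) hz.le) with h | h
    · exact h
    · exfalso
      have hconst : ∀ x ∈ Icc δ z, φ x = φ δ := by
        intro x hx
        have h1 : φ x ≤ φ δ := anti (mem_Ici.mpr le_rfl) (mem_Ici.mpr hx.1) hx.1
        have h2 : φ z ≤ φ x := anti (mem_Ici.mpr hx.1) (mem_Ici.mpr (hx.1.trans hx.2)) hx.2
        linarith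
      have hderiv0 : ∀ x ∈ Ioo δ z, deriv φ x = 0 := by
        intro x hx
        have hev : φ =ᶠ[𝓝 x] fun _ => φ δ := by
          filter_upwards [Ioo_mem_nhds hx.1 hx.2] with t ht
          exact hconst t ⟨ht.1.le, ht.2.le⟩
        rw [hev.deriv_eq]; exact deriv_const x (φ δ)
      have hφi : ContDiff ℝ ((⊤:ℕ∞) : WithTop ℕ∞) φ := hφ.of_le (by simp)
      have hcd := (contDiff_infty_iff_deriv.mp hφi).2
      have hd2 : HasDerivAt (deriv φ) (deriv (deriv φ) δ) δ :=
        ((hcd.differentiable (by simp)) δ).hasDerivAt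
      have hslope := hasDerivAt_iff_tendsto_slope.mp hd2
      have hmono : 𝓝[>] δ ≤ 𝓝[≠] δ :=
        nhdsWithin_mono δ (fun x hx => mem_compl_singleton_iff.mpr (mem_Ioi.mp hx).ne')
      have hev2 : ∀ᶠ x in 𝓝[>] δ, slope (deriv φ) δ x < 0 :=
        (hslope.mono_left hmono).eventually (eventually_lt_nhds hA3₄)
      have hev3 : Ioo δ z ∈ 𝓝[>] δ := Ioo_mem_nhdsGT_of_mem ⟨le_rfl, hz⟩
      obtain ⟨x, hx1, hx2⟩ := (hev2.and hev3).exists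
      rw [slope_def_field, hderiv0 x hx2, hA3₂] at hx1
      norm_num at hx1
  intro y₂₀ hy₂₀
  have htmem : δ ≤ -y₂₀ := by linarith
  have hφt1 : 1 < φ (-y₂₀) := hgt1 _ htmem
  have hφtμ : φ (-y₂₀) ≤ μs / μd := by
    have := anti (mem_Ici.mpr le_rfl) (mem_Ici.mpr htmem) htmem
    rwa [hA3₃] at this
  have hval : φ y₂₀ = -φ (-y₂₀) := by have := hA2 y₂₀; linarith
  have hc1 : -1 < -2 - φ y₂₀ := by rw [hval]; linarith
  have hc2 : -2 - φ y₂₀ ≤ μs / μd - 2 := by rw [hval]; linarith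
  have hmδ : φ (-δ) = -(μs/μd) := by rw [hA2 δ, hA3₃]
  have hcIcc : -2 - φ y₂₀ ∈ Icc (φ (-δ)) (φ δ) := by
    rw [hmδ, hA3₃]; constructor <;> linarith
  obtain ⟨y, hyIcc, hfy⟩ := intermediate_value_Icc (by linarith : -δ ≤ δ) contφ.continuousOn hcIcc
  have hyIoo : y ∈ Ioo (-δ) δ := by
    constructor
    · rcases lt_or_eq_of_le hyIcc.1 with h | h
      · exact h
      · exfalso; rw [← h, hmδ] at hfy; linarith
    · rcases lt_or_eq_of_le hyIcc.2 with h | h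
      · exact h
      · exfalso; rw [h, hA3₃] at hfy; linarith
  refine ⟨⟨y, ⟨hyIoo, hfy⟩, ?_⟩, ?_⟩
  · rintro y' ⟨hy'Ioo, hfy'⟩
    exact mono.injOn (Ioo_subset_Icc_self hy'Ioo) (Ioo_subset_Icc_self hyIoo)
      (hfy'.trans hfy.symm)
  · intro y₂₁ hmem hval₁
    refine ⟨by rw [hval₁]; exact hc1, by rw [hval₁]; exact hc2, ?_⟩
    constructor
    · intro heq
      by_contra hne
      have h1 : y₂₀ < -δ := lt_of_le_of_ne hy₂₀ hne
      have h2 : δ < -y₂₀ := by linarith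
      have h3 := hlt _ h2
      rw [hA3₃] at h3
      linarith [hval₁, hval, heq]
    · intro heq
      rw [hval₁, heq, hA2 δ, hA3₃]; ring
end

section
/- Let ξ > 0. The set of points (y₂, θ) ∈ [−δ, δ] × [0, 2π) satisfying −ξ⁻¹ y₂ − cos θ = 0 and φ'(y₂) = 0 (the folded singularities of the desingularized reduced system) is: for ξ > δ, exactly the four distinct points (−δ, arccos(δ/ξ)), (−δ, 2π − arccos(δ/ξ)), (δ, arccos(−δ/ξ)), (δ, 2π − arccos(−δ/ξ)); for ξ = δ, exactly the two points (−δ, 0) and (δ, π); and for 0 < ξ < δ, empty. -/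
open Real Set Filter Topology

private lemma deriv_even_of_odd (φ : ℝ → ℝ) (hφ : ContDiff ℝ (⊤ : ℕ∞) φ)
    (hA2 : ∀ s, φ (-s) = -φ s) (s : ℝ) : deriv φ (-s) = deriv φ s := by
  have hd : Differentiable ℝ φ := hφ.differentiable (by simp)
  have h1 : deriv (fun x => φ (-x)) s = -deriv φ (-s) := deriv_comp_neg φ s
  have he : (fun x => φ (-x)) = fun x => -φ x := funext hA2
  rw [he, deriv.fun_neg] at h1
  linarith

private lemma cos_eq_in_Ico {θ c : ℝ} (h0 : 0 ≤ θ) (h2 : θ < 2 * π)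
    (hc : Real.cos θ = c) : θ = Real.arccos c ∨ θ = 2 * π - Real.arccos c := by
  rcases le_or_gt θ π with h | h
  · left; rw [← hc, Real.arccos_cos h0 h]
  · right
    have h1 : 0 ≤ 2 * π - θ := by linarith
    have h2' : 2 * π - θ ≤ π := by linarith
    have hc' : Real.cos (2 * π - θ) = c := by
      rw [Real.cos_sub]; simp [Real.cos_two_pi, Real.sin_two_pi, hc]
    rw [← hc', Real.arccos_cos h1 h2']; ring

/-- classification of the folded singularities of the desingularized reduced
system `y₂' = -ξ⁻¹ y₂ - cos θ`, `θ' = μd φ'(y₂)` on `[-δ, δ] × [0, 2π)`: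
four distinct points for `ξ > δ`, two points for `ξ = δ`, none for `0 < ξ < δ`. -/
theorem stmt_6 (δ μd μs : ℝ) (φ : ℝ → ℝ)
    (hδ : 0 < δ) (hμd : 0 < μd) (hμ : μd < μs) (hratio : 1 < μs / μd)
    (hφ : ContDiff ℝ (⊤ : ℕ∞) φ)
    (hA1p : Tendsto φ atTop (𝓝 1)) (hA1m : Tendsto φ atBot (𝓝 (-1)))
    (hA2 : ∀ s, φ (-s) = -φ s)
    (hA3₁ : ∀ s, 0 < deriv φ s ↔ s ∈ Ioo (-δ) δ)
    (hA3₂ : deriv φ δ = 0) (hA3₃ : φ δ = μs / μd)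
    (hA3₄ : deriv (deriv φ) δ < 0)
    (ξ : ℝ) (hξ : 0 < ξ)
    (S : Set (ℝ × ℝ))
    (hS : S = {p : ℝ × ℝ | p.1 ∈ Icc (-δ) δ ∧ p.2 ∈ Ico 0 (2 * π) ∧
      -ξ⁻¹ * p.1 - cos p.2 = 0 ∧ deriv φ p.1 = 0}) :
    (δ < ξ → S = {(-δ, arccos (δ / ξ)), (-δ, 2 * π - arccos (δ / ξ)),
        (δ, arccos (-δ / ξ)), (δ, 2 * π - arccos (-δ / ξ))} ∧ S.ncard = 4) ∧
    (ξ = δ → S = {(-δ, 0), (δ, π)} ∧ S.ncard = 2) ∧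
    (ξ < δ → S = ∅) := by
  have hπ := Real.pi_pos
  have hdm : deriv φ (-δ) = 0 := (deriv_even_of_odd φ hφ hA2 δ).trans hA3₂
  have hne : -δ ≠ δ := by linarith
  -- points in S have first coordinate ±δ
  have hfst : ∀ p : ℝ × ℝ, p ∈ S → p.1 = -δ ∨ p.1 = δ := by
    intro p hp
    rw [hS] at hp
    obtain ⟨⟨h1, h2⟩, _, _, h4⟩ := hp
    rcases eq_or_lt_of_le h1 with h | h
    · left; exact h.symm
    rcases eq_or_lt_of_le h2 with h' | h'
    · right; exact h'
    exact absurd h4 (by have := (hA3₁ p.1).mpr ⟨h, h'⟩; linarith)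
  refine ⟨?_, ?_, ?_⟩
  · -- δ < ξ
    intro hlt
    have hc1 : (0:ℝ) < δ / ξ := div_pos hδ hξ
    have hc2 : δ / ξ < 1 := (div_lt_one hξ).mpr hlt
    have hA1 : arccos (δ / ξ) < π / 2 := arccos_lt_pi_div_two.mpr hc1
    have hA1' : 0 < arccos (δ / ξ) := arccos_pos.mpr hc2
    have hA2' : 0 < arccos (-(δ / ξ)) := arccos_pos.mpr (by linarith)
    have hA2l : arccos (-(δ / ξ)) ≤ π := arccos_le_pi _
    have hA2lt : arccos (-(δ / ξ)) < π := by
      rcases lt_or_eq_of_le hA2l with h | h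
      · exact h
      · exfalso
        have := Real.cos_arccos (by linarith : (-1:ℝ) ≤ -(δ/ξ)) (by linarith)
        rw [h, Real.cos_pi] at this
        nlinarith
    have hcos1 : Real.cos (arccos (δ / ξ)) = δ / ξ :=
      Real.cos_arccos (by linarith) (by linarith)
    have hcos2 : Real.cos (arccos (-(δ / ξ))) = -(δ / ξ) :=
      Real.cos_arccos (by linarith) (by linarith)
    have hcossub : ∀ x : ℝ, Real.cos (2 * π - x) = Real.cos x := by
      intro x; rw [Real.cos_sub]; simp [Real.cos_two_pi, Real.sin_two_pi]
    have hmem : ∀ y θ : ℝ, (y = -δ ∨ y = δ) → θ ∈ Ico 0 (2*π) →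
        Real.cos θ = -ξ⁻¹ * y → (y, θ) ∈ S := by
      intro y θ hy hθ hcθ
      rw [hS]
      refine ⟨⟨?_, ?_⟩, hθ, by linarith, ?_⟩
      · rcases hy with h | h <;> simp [h]; linarith
      · rcases hy with h | h <;> simp [h]; linarith
      · rcases hy with h | h <;> simp [h, hdm, hA3₂]
    have hnegrw : -δ / ξ = -(δ / ξ) := by ring
    have hSeq : S = {(-δ, arccos (δ / ξ)), (-δ, 2 * π - arccos (δ / ξ)),
        (δ, arccos (-δ / ξ)), (δ, 2 * π - arccos (-δ / ξ))} := by
      ext p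
      constructor
      · intro hp
        have hy := hfst p hp
        rw [hS] at hp
        obtain ⟨h1, h2, h3, h4⟩ := hp
        rcases hy with hy | hy
        · have hcθ : Real.cos p.2 = δ / ξ := by
            have : Real.cos p.2 = -ξ⁻¹ * p.1 := by linarith
            rw [this, hy]; field_simp
          rcases cos_eq_in_Ico h2.1 h2.2 hcθ with h | h
          · left; exact Prod.ext hy h
          · right; left; exact Prod.ext hy h
        · have hcθ : Real.cos p.2 = -(δ / ξ) := by
            have : Real.cos p.2 = -ξ⁻¹ * p.1 := by linarith
            rw [this, hy]; field_simp
          rcases cos_eq_in_Ico h2.1 h2.2 hcθ with h | h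
          · right; right; left; exact Prod.ext hy (by rw [h, hnegrw])
          · right; right; right; exact Prod.ext hy (by rw [h, hnegrw])
      · intro hp
        simp only [mem_insert_iff, mem_singleton_iff] at hp
        rcases hp with h | h | h | h <;> subst h
        · exact hmem _ _ (Or.inl rfl) ⟨arccos_nonneg _, by linarith⟩
            (by rw [hcos1]; field_simp)
        · exact hmem _ _ (Or.inl rfl) ⟨by linarith, by linarith⟩
            (by rw [hcossub, hcos1]; field_simp)
        · exact hmem _ _ (Or.inr rfl) ⟨arccos_nonneg _, by linarith [arccos_le_pi (-δ/ξ)]⟩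
            (by rw [hnegrw, hcos2]; field_simp)
        · exact hmem _ _ (Or.inr rfl) ⟨by linarith [arccos_le_pi (-δ/ξ)], by
              rw [hnegrw]; linarith⟩
            (by rw [hcossub, hnegrw, hcos2]; field_simp)
    refine ⟨hSeq, ?_⟩
    rw [hSeq]
    have hd1 : arccos (δ / ξ) ≠ 2 * π - arccos (δ / ξ) := by
      have : arccos (δ / ξ) < π := by linarith
      intro h; linarith [h]
    have hd2 : arccos (-δ / ξ) ≠ 2 * π - arccos (-δ / ξ) := by
      rw [hnegrw]; intro h; linarith
    rw [Set.ncard_insert_of_notMem (by simp [Prod.ext_iff, hne, hd1]),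
        Set.ncard_insert_of_notMem (by simp [Prod.ext_iff, hne]),
        Set.ncard_insert_of_notMem (by simp [Prod.ext_iff, hd2]),
        Set.ncard_singleton]
  · -- ξ = δ
    intro heq
    subst heq
    have hSeq : S = {(-ξ, 0), (ξ, π)} := by
      ext p
      constructor
      · intro hp
        have hy := hfst p hp
        rw [hS] at hp
        obtain ⟨h1, h2, h3, h4⟩ := hp
        rcases hy with hy | hy
        · have hcθ : Real.cos p.2 = 1 := by
            have : Real.cos p.2 = -ξ⁻¹ * p.1 := by linarith
            rw [this, hy]; field_simp
          rcases cos_eq_in_Ico h2.1 h2.2 hcθ with h | h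
          · left; exact Prod.ext hy (by rw [h, Real.arccos_one])
          · exfalso; rw [Real.arccos_one] at h; linarith [h2.2]
        · have hcθ : Real.cos p.2 = -1 := by
            have : Real.cos p.2 = -ξ⁻¹ * p.1 := by linarith
            rw [this, hy]; field_simp
          rcases cos_eq_in_Ico h2.1 h2.2 hcθ with h | h
          · right; exact Prod.ext hy (by rw [h, Real.arccos_neg_one])
          · right; exact Prod.ext hy (by rw [h, Real.arccos_neg_one]; ring)
      · intro hp
        simp only [mem_insert_iff, mem_singleton_iff] at hp
        rw [hS]
        rcases hp with h | h <;> subst h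
        · refine ⟨?_, ?_, ?_, ?_⟩
          · simp only [mem_Icc]; constructor <;> (try norm_num) <;> (try linarith)
          · simp only [mem_Ico]; constructor <;> (try norm_num) <;> (try linarith)
          · simp only []; simp; field_simp; norm_num
          · simpa using hdm
        · refine ⟨?_, ?_, ?_, ?_⟩
          · simp only [mem_Icc]; constructor <;> (try norm_num) <;> (try linarith)
          · simp only [mem_Ico]; constructor <;> (try norm_num) <;> (try linarith)
          · simp only []; simp; field_simp; norm_num
          · simpa using hA3₂
    refine ⟨hSeq, ?_⟩
    rw [hSeq, Set.ncard_pair (by simp [Prod.ext_iff]; intro h; linarith)]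
  · -- ξ < δ
    intro hlt
    ext p
    simp only [mem_empty_iff_false, iff_false]
    intro hp
    have hy := hfst p hp
    rw [hS] at hp
    obtain ⟨h1, h2, h3, h4⟩ := hp
    have hle := Real.neg_one_le_cos p.2
    have hge := Real.cos_le_one p.2
    have hcθ : Real.cos p.2 = -ξ⁻¹ * p.1 := by linarith
    rcases hy with hy | hy
    · rw [hy] at hcθ
      have : Real.cos p.2 = δ / ξ := by rw [hcθ]; field_simp
      have hgt : (1:ℝ) < δ / ξ := (one_lt_div hξ).mpr hlt
      linarith
    · rw [hy] at hcθ
      have : Real.cos p.2 = -(δ / ξ) := by rw [hcθ]; field_simp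
      have hgt : (1:ℝ) < δ / ξ := (one_lt_div hξ).mpr hlt
      linarith
end

section
/- Let ξ > δ and set θ₋ = arccos(δ/ξ) ∈ (0, π/2). The Jacobian matrix of the desingularized reduced system at the folded singularity z₋ = (−δ, θ₋) is J = [[−ξ⁻¹, sin θ₋], [μ_d φ''(−δ), 0]]; its determinant equals −μ_d φ''(−δ) sin θ₋ and is strictly negative (since φ''(−δ) = −φ''(δ) > 0 by oddness of φ and sin θ₋ > 0). Consequently J has two real eigenvalues λ₁ < 0 < λ₂, i.e., z₋ is a hyperbolic saddle (a folded saddle). -/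
open Real Set Filter Topology

/-- the folded singularity `z₋ = (-δ, θ₋)` with `θ₋ = arccos (δ/ξ) ∈ (0, π/2)`
is a folded saddle: the Jacobian `J = [[-ξ⁻¹, sin θ₋], [μd φ''(-δ), 0]]` has determinant
`-μd φ''(-δ) sin θ₋ < 0`, hence two real eigenvalues `λ₁ < 0 < λ₂`. -/
theorem stmt_7 (δ μd μs : ℝ) (φ : ℝ → ℝ)
    (hδ : 0 < δ) (hμd : 0 < μd) (hμ : μd < μs) (hratio : 1 < μs / μd)
    (hφ : ContDiff ℝ (⊤ : ℕ∞) φ)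
    (hA1p : Tendsto φ atTop (𝓝 1)) (hA1m : Tendsto φ atBot (𝓝 (-1)))
    (hA2 : ∀ s, φ (-s) = -φ s)
    (hA3₁ : ∀ s, 0 < deriv φ s ↔ s ∈ Ioo (-δ) δ)
    (hA3₂ : deriv φ δ = 0) (hA3₃ : φ δ = μs / μd)
    (hA3₄ : deriv (deriv φ) δ < 0)
    (ξ : ℝ) (hξ : δ < ξ)
    (θm : ℝ) (hθm : θm = arccos (δ / ξ))
    (J : Matrix (Fin 2) (Fin 2) ℝ)
    (hJ : J = !![-ξ⁻¹, sin θm; μd * deriv (deriv φ) (-δ), 0]) :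
    θm ∈ Ioo 0 (π / 2) ∧
    J.det = -(μd * deriv (deriv φ) (-δ) * sin θm) ∧
    J.det < 0 ∧
    ∃ l₁ l₂ : ℝ, l₁ < 0 ∧ 0 < l₂ ∧
      ∀ μ : ℝ, (μ ^ 2 - J.trace * μ + J.det = 0 ↔ μ = l₁ ∨ μ = l₂) := by
  have hξ0 : (0:ℝ) < ξ := hδ.trans hξ
  have hr0 : 0 < δ / ξ := div_pos hδ hξ0
  have hr1 : δ / ξ < 1 := (div_lt_one hξ0).mpr hξ
  -- θm ∈ (0, π/2)
  have hθmem : θm ∈ Ioo 0 (π / 2) := by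
    rw [hθm]
    constructor
    · apply arccos_pos.mpr hr1
    · apply arccos_lt_pi_div_two.mpr hr0
  have hsin : 0 < sin θm := sin_pos_of_pos_of_lt_pi hθmem.1
    (hθmem.2.trans (by linarith [pi_pos]))
  -- evenness of deriv φ
  have hdφ : Differentiable ℝ φ := hφ.differentiable (by simp)
  have heven : ∀ s, deriv φ (-s) = deriv φ s := by
    intro s
    have h1 : deriv (fun x => φ (-x)) s = -deriv φ (-s) := deriv_comp_neg φ s
    have h2 : deriv (fun x => φ (-x)) s = -deriv φ s := by
      have : (fun x => φ (-x)) = fun x => -φ x := funext hA2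
      rw [this, deriv.fun_neg]
    linarith [h1.symm.trans h2]
  have hdφ' : Differentiable ℝ (deriv φ) := by
    have h1 : ContDiff ℝ ((⊤ : ℕ∞) : WithTop ℕ∞) φ := hφ.of_le (by simp)
    exact ((h1.iterate_deriv 1).differentiable (by simp) : Differentiable ℝ (deriv^[1] φ))
  have hodd2 : deriv (deriv φ) (-δ) = -deriv (deriv φ) δ := by
    have h1 : deriv (fun x => deriv φ (-x)) δ = -deriv (deriv φ) (-δ) :=
      deriv_comp_neg (deriv φ) δ
    have h2 : deriv (fun x => deriv φ (-x)) δ = deriv (deriv φ) δ := by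
      have : (fun x => deriv φ (-x)) = deriv φ := funext heven
      rw [this]
    linarith [h1.symm.trans h2]
  have hpos : 0 < deriv (deriv φ) (-δ) := by rw [hodd2]; linarith
  -- determinant
  have hdet : J.det = -(μd * deriv (deriv φ) (-δ) * sin θm) := by
    rw [hJ, Matrix.det_fin_two_of]; ring
  have hdetneg : J.det < 0 := by
    rw [hdet]
    have := mul_pos (mul_pos hμd hpos) hsin
    linarith
  refine ⟨hθmem, hdet, hdetneg, ?_⟩
  -- eigenvalues
  set T := J.trace with hT
  set D := J.det with hD
  have hdisc : 0 < T ^ 2 - 4 * D := by nlinarith [sq_nonneg T]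
  set s := Real.sqrt (T ^ 2 - 4 * D) with hs
  have hs2 : s ^ 2 = T ^ 2 - 4 * D := Real.sq_sqrt hdisc.le
  have hsT : |T| < s := by
    have hs0 : 0 ≤ s := Real.sqrt_nonneg _
    nlinarith [abs_nonneg T, sq_abs T]
  refine ⟨(T - s) / 2, (T + s) / 2, ?_, ?_, ?_⟩
  · have := le_abs_self T; linarith
  · have := neg_abs_le T; linarith
  · intro μ
    have hfac : μ ^ 2 - T * μ + D = (μ - (T - s) / 2) * (μ - (T + s) / 2) := by
      have : D = ((T - s) / 2) * ((T + s) / 2) := by nlinarith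
      rw [this]; ring
    rw [hfac]
    constructor
    · intro h
      rcases mul_eq_zero.mp h with h' | h'
      · left; linarith
      · right; linarith
    · rintro (h | h) <;> rw [h] <;> ring
end

section
/- Let ξ > δ. At the folded singularity (−δ, 2π − arccos(δ/ξ)) of the desingularized reduced system, the Jacobian matrix is J = [[−ξ⁻¹, −√(1 − δ²/ξ²)], [μ_d φ''(−δ), 0]], which has trace −ξ⁻¹ < 0 and determinant μ_d φ''(−δ) √(1 − δ²/ξ²) > 0; hence both eigenvalues of J have negative real part (the singularity is stable for the desingularized flow). Moreover, the discriminant D(ξ) = ξ⁻² − 4 μ_d φ''(−δ) √(1 − δ²/ξ²) is strictly decreasing in ξ on (δ, ∞), tends to δ⁻² > 0 as ξ → δ⁺ and to −4 μ_d φ''(−δ) < 0 as ξ → ∞; consequently there exists a unique ξ_dn > δ such that D(ξ) < 0 (non-real eigenvalues, i.e., a folded focus) if and only if ξ > ξ_dn. -/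
open Real Set Filter Topology

lemma D_props (δ k : ℝ) (hδ : 0 < δ) (hk : 0 < k) :
    StrictAntiOn (fun s : ℝ => s⁻¹ ^ 2 - k * Real.sqrt (1 - δ ^ 2 / s ^ 2)) (Ioi δ) ∧
    Tendsto (fun s : ℝ => s⁻¹ ^ 2 - k * Real.sqrt (1 - δ ^ 2 / s ^ 2)) (𝓝[>] δ) (𝓝 (δ⁻¹ ^ 2)) ∧
    Tendsto (fun s : ℝ => s⁻¹ ^ 2 - k * Real.sqrt (1 - δ ^ 2 / s ^ 2)) atTop (𝓝 (-k)) ∧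
    (∃! ξdn : ℝ, δ < ξdn ∧ ∀ s, δ < s →
      (s⁻¹ ^ 2 - k * Real.sqrt (1 - δ ^ 2 / s ^ 2) < 0 ↔ ξdn < s)) := by
  set D : ℝ → ℝ := fun s => s⁻¹ ^ 2 - k * Real.sqrt (1 - δ ^ 2 / s ^ 2) with hD
  have hsub : ∀ s : ℝ, δ < s → 0 < 1 - δ ^ 2 / s ^ 2 := by
    intro s hs
    have hs0 : 0 < s := hδ.trans hs
    have : δ ^ 2 / s ^ 2 < 1 := by
      rw [div_lt_one (by positivity)]
      nlinarith
    linarith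
  have hanti : StrictAntiOn D (Ioi δ) := by
    intro a ha b hb hab
    simp only [mem_Ioi] at ha hb
    have ha0 : 0 < a := hδ.trans ha
    have hb0 : 0 < b := hδ.trans hb
    have h1 : b⁻¹ ^ 2 < a⁻¹ ^ 2 := by
      have hi : b⁻¹ < a⁻¹ := inv_strictAnti₀ ha0 hab
      have hbi : 0 < b⁻¹ := by positivity
      nlinarith
    have h2 : Real.sqrt (1 - δ ^ 2 / a ^ 2) < Real.sqrt (1 - δ ^ 2 / b ^ 2) := by
      apply Real.sqrt_lt_sqrt (le_of_lt (hsub a ha))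
      have : δ ^ 2 / b ^ 2 < δ ^ 2 / a ^ 2 := by
        apply div_lt_div_of_pos_left (by positivity) (by positivity)
        nlinarith
      linarith
    simp only [hD]
    nlinarith [h2, hk]
  have htd : Tendsto D (𝓝[>] δ) (𝓝 (δ⁻¹ ^ 2)) := by
    have hcont : ContinuousAt D δ := by
      apply ContinuousAt.sub
      · exact (continuousAt_id.inv₀ hδ.ne').pow 2
      · apply ContinuousAt.mul continuousAt_const
        apply Real.continuous_sqrt.continuousAt.comp
        exact continuousAt_const.sub
          (ContinuousAt.div continuousAt_const (continuousAt_pow δ 2) (by positivity))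
    have hval : D δ = δ⁻¹ ^ 2 := by
      simp only [hD]
      simp [div_self (pow_ne_zero 2 hδ.ne')]
    rw [← hval]
    exact hcont.continuousWithinAt.tendsto
  have hti : Tendsto D atTop (𝓝 (-k)) := by
    have h1 : Tendsto (fun s : ℝ => s⁻¹ ^ 2) atTop (𝓝 0) := by
      have := tendsto_inv_atTop_zero (𝕜 := ℝ)
      simpa using this.pow 2
    have h2 : Tendsto (fun s : ℝ => δ ^ 2 / s ^ 2) atTop (𝓝 0) :=
      Tendsto.div_atTop tendsto_const_nhds (tendsto_pow_atTop two_ne_zero)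
    have h3 : Tendsto (fun s : ℝ => Real.sqrt (1 - δ ^ 2 / s ^ 2)) atTop (𝓝 1) := by
      have h4 : Tendsto (fun s : ℝ => 1 - δ ^ 2 / s ^ 2) atTop (𝓝 1) := by
        simpa using tendsto_const_nhds.sub h2
      have := (Real.continuous_sqrt.continuousAt (x := (1:ℝ))).tendsto.comp h4
      simpa [Function.comp_def] using this
    have h5 := h1.sub (h3.const_mul k)
    rw [hD]
    convert h5 using 2
    ring
  refine ⟨hanti, htd, hti, ?_⟩
  obtain ⟨a, haD, haδ⟩ :=
    ((htd.eventually (eventually_gt_nhds (by positivity : (0:ℝ) < δ⁻¹ ^ 2))).and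
      self_mem_nhdsWithin).exists
  have haδ : δ < a := haδ
  obtain ⟨b, hbD, hba⟩ :=
    ((hti.eventually (eventually_lt_nhds (by linarith : -k < 0))).and
      (eventually_gt_atTop a)).exists
  have hcontOn : ContinuousOn D (Icc a b) := by
    intro s hs
    have hs0 : 0 < s := lt_of_lt_of_le (hδ.trans haδ) hs.1
    apply ContinuousWithinAt.sub
    · exact ((continuousAt_id.inv₀ hs0.ne').pow 2).continuousWithinAt
    · apply ContinuousWithinAt.mul continuousWithinAt_const
      exact (Real.continuous_sqrt.continuousAt.comp
        (continuousAt_const.sub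
          (ContinuousAt.div continuousAt_const (continuousAt_pow s 2)
            (by positivity)))).continuousWithinAt
  have hmem : (0:ℝ) ∈ Icc (D b) (D a) := ⟨hbD.le, haD.le⟩
  obtain ⟨ξdn, hξdnIcc, hξdn0⟩ := intermediate_value_Icc' hba.le hcontOn hmem
  have hξdnδ : δ < ξdn := lt_of_lt_of_le haδ hξdnIcc.1
  refine ⟨ξdn, ⟨hξdnδ, ?_⟩, ?_⟩
  · intro s hs
    constructor
    · intro hDs
      have hDs : D s < 0 := hDs
      by_contra hle
      push_neg at hle
      rcases lt_or_eq_of_le hle with hlt | heq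
      · have := hanti (mem_Ioi.mpr hs) (mem_Ioi.mpr hξdnδ) hlt
        rw [hξdn0] at this
        linarith
      · rw [heq, hξdn0] at hDs
        linarith
    · intro hgt
      have := hanti (mem_Ioi.mpr hξdnδ) (mem_Ioi.mpr hs) hgt
      rw [hξdn0] at this
      show D s < 0
      exact this
  · rintro y ⟨hyδ, hy⟩
    by_contra hne
    rcases lt_or_gt_of_ne hne with hlt | hgt
    · set s := (y + ξdn) / 2 with hs
      have hs1 : y < s := by rw [hs]; linarith
      have hs2 : s < ξdn := by rw [hs]; linarith
      have hsδ : δ < s := hyδ.trans hs1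
      have hDs : D s < 0 := (hy s hsδ).mpr hs1
      have := hanti (mem_Ioi.mpr hsδ) (mem_Ioi.mpr hξdnδ) hs2
      rw [hξdn0] at this
      linarith
    · set s := (ξdn + y) / 2 with hs
      have hs1 : ξdn < s := by rw [hs]; linarith
      have hs2 : s < y := by rw [hs]; linarith
      have hsδ : δ < s := hξdnδ.trans hs1
      have hDs : D s < 0 := by
        have := hanti (mem_Ioi.mpr hξdnδ) (mem_Ioi.mpr hsδ) hs1
        rw [hξdn0] at this
        exact this
      exact absurd ((hy s hsδ).mp hDs) (not_lt.mpr hs2.le)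

lemma odd_deriv_even (g : ℝ → ℝ) (h : ∀ s, g (-s) = -g s) (s : ℝ) :
    deriv g (-s) = deriv g s := by
  have h1 : (fun x => g (-x)) = (fun x => -g x) := funext h
  have := deriv_comp_neg (f := g) (x := s)
  rw [h1, deriv.fun_neg] at this
  linarith

lemma even_deriv_odd (g : ℝ → ℝ) (h : ∀ s, g (-s) = g s) (s : ℝ) :
    deriv g (-s) = -deriv g s := by
  have h1 : (fun x => g (-x)) = g := funext h
  have := deriv_comp_neg (f := g) (x := s)
  rw [h1] at this
  linarith

/-- the folded singularity `(-δ, 2π - arccos (δ/ξ))` is stable for the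
desingularized flow: the Jacobian `J = [[-ξ⁻¹, -√(1-δ²/ξ²)], [μd φ''(-δ), 0]]` has negative
trace and positive determinant, so both eigenvalues have negative real part; and the
discriminant `D(ξ) = ξ⁻² - 4 μd φ''(-δ) √(1-δ²/ξ²)` is strictly decreasing on `(δ, ∞)`,
tending to `δ⁻² > 0` as `ξ → δ⁺` and to `-4 μd φ''(-δ) < 0` as `ξ → ∞`; hence there is a
unique `ξ_dn > δ` with `D(ξ) < 0 ↔ ξ > ξ_dn` on `(δ, ∞)`. -/
theorem stmt_8 (δ μd μs : ℝ) (φ : ℝ → ℝ)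
    (hδ : 0 < δ) (hμd : 0 < μd) (hμ : μd < μs) (hratio : 1 < μs / μd)
    (hφ : ContDiff ℝ (⊤ : ℕ∞) φ)
    (hA1p : Tendsto φ atTop (𝓝 1)) (hA1m : Tendsto φ atBot (𝓝 (-1)))
    (hA2 : ∀ s, φ (-s) = -φ s)
    (hA3₁ : ∀ s, 0 < deriv φ s ↔ s ∈ Ioo (-δ) δ)
    (hA3₂ : deriv φ δ = 0) (hA3₃ : φ δ = μs / μd)
    (hA3₄ : deriv (deriv φ) δ < 0)
    (ξ : ℝ) (hξ : δ < ξ)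
    (J : Matrix (Fin 2) (Fin 2) ℝ)
    (hJ : J = !![-ξ⁻¹, -Real.sqrt (1 - δ ^ 2 / ξ ^ 2);
                 μd * deriv (deriv φ) (-δ), 0])
    (D : ℝ → ℝ)
    (hD : D = fun s => s⁻¹ ^ 2 -
      4 * μd * deriv (deriv φ) (-δ) * Real.sqrt (1 - δ ^ 2 / s ^ 2)) :
    J.trace = -ξ⁻¹ ∧ J.trace < 0 ∧
    J.det = μd * deriv (deriv φ) (-δ) * Real.sqrt (1 - δ ^ 2 / ξ ^ 2) ∧ 0 < J.det ∧
    (∀ z : ℂ, z ^ 2 - (J.trace : ℂ) * z + (J.det : ℂ) = 0 → z.re < 0) ∧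
    StrictAntiOn D (Ioi δ) ∧
    Tendsto D (𝓝[>] δ) (𝓝 (δ⁻¹ ^ 2)) ∧
    Tendsto D atTop (𝓝 (-(4 * μd * deriv (deriv φ) (-δ)))) ∧
    0 < δ⁻¹ ^ 2 ∧ -(4 * μd * deriv (deriv φ) (-δ)) < 0 ∧
    ∃! ξdn : ℝ, δ < ξdn ∧ ∀ s, δ < s → (D s < 0 ↔ ξdn < s) := by
  have hξ0 : 0 < ξ := hδ.trans hξ
  have hd1even : ∀ s, deriv φ (-s) = deriv φ s := odd_deriv_even φ hA2
  have hd2odd : deriv (deriv φ) (-δ) = -deriv (deriv φ) δ :=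
    even_deriv_odd (deriv φ) hd1even δ
  have hpp : 0 < deriv (deriv φ) (-δ) := by rw [hd2odd]; linarith
  have hk : 0 < 4 * μd * deriv (deriv φ) (-δ) := by positivity
  have hsub1 : 0 < 1 - δ ^ 2 / ξ ^ 2 := by
    have : δ ^ 2 / ξ ^ 2 < 1 := by
      rw [div_lt_one (by positivity)]
      nlinarith
    linarith
  have hsqrtpos : 0 < Real.sqrt (1 - δ ^ 2 / ξ ^ 2) := Real.sqrt_pos.mpr hsub1
  have htr : J.trace = -ξ⁻¹ := by
    rw [hJ, Matrix.trace_fin_two_of]; ring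
  have hdet : J.det = μd * deriv (deriv φ) (-δ) * Real.sqrt (1 - δ ^ 2 / ξ ^ 2) := by
    rw [hJ, Matrix.det_fin_two_of]; ring
  have htrneg : J.trace < 0 := by
    rw [htr]; simp [hξ0]
  have hdetpos : 0 < J.det := by
    rw [hdet]; positivity
  obtain ⟨hanti, htd, hti, huniq⟩ :=
    D_props δ (4 * μd * deriv (deriv φ) (-δ)) hδ hk
  rw [← hD] at hanti htd hti
  refine ⟨htr, htrneg, hdet, hdetpos, ?_, hanti, htd, hti, by positivity,
    by linarith, ?_⟩
  · intro z hz
    set t : ℝ := J.trace with ht_def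
    set d : ℝ := J.det with hd_def
    have him : (z ^ 2 - (t : ℂ) * z + (d : ℂ)).im = 0 := by rw [hz]; simp
    have hre : (z ^ 2 - (t : ℂ) * z + (d : ℂ)).re = 0 := by rw [hz]; simp
    simp [pow_two, Complex.mul_im, Complex.mul_re] at him hre
    have hy : z.im * (2 * z.re - t) = 0 := by nlinarith [him]
    rcases mul_eq_zero.mp hy with hy0 | hxt
    · by_contra hx
      push_neg at hx
      nlinarith [hre, htrneg, hdetpos]
    · nlinarith [htrneg]
  · obtain ⟨ξdn, ⟨h1, h2⟩, h3⟩ := huniq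
    refine ⟨ξdn, ⟨h1, ?_⟩, ?_⟩
    · intro s hs
      rw [hD]
      exact h2 s hs
    · rintro y ⟨hy1, hy2⟩
      refine h3 y ⟨hy1, ?_⟩
      intro s hs
      rw [hD] at hy2
      exact hy2 s hs
end

section
/- Suppose μ_s > 1. Then there exist unique a, b ∈ (−δ, δ) with μ_d φ(a) = μ_s − 2 and φ(b) = μ_s/μ_d − 2, and a < b holds if and only if μ_d < 1. (This is the criterion that, in the limit ξ → ∞, the minimal y₂-value of the canard level curve at θ = π/2, determined by μ_d φ(y₂) = μ_s − 2, lies below the landing value y₂₋ of the singular return of the fold line, determined by φ(y₂₋) = μ_s/μ_d − 2; i.e., the canard intersects G₋(J₋) if and only if μ_d < 1.) -/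
open Real Set Filter Topology

/-- for `μs > 1` there are unique `a, b ∈ (-δ, δ)` with `μd φ(a) = μs - 2`
and `φ(b) = μs/μd - 2`, and `a < b` holds iff `μd < 1` (the canard intersects `G₋(J₋)`
iff `μd < 1`). -/
theorem stmt_11 (δ μd μs : ℝ) (φ : ℝ → ℝ)
    (hδ : 0 < δ) (hμd : 0 < μd) (hμ : μd < μs) (hratio : 1 < μs / μd)
    (hφ : ContDiff ℝ (⊤ : ℕ∞) φ)
    (hA1p : Tendsto φ atTop (𝓝 1)) (hA1m : Tendsto φ atBot (𝓝 (-1)))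
    (hA2 : ∀ s, φ (-s) = -φ s)
    (hA3₁ : ∀ s, 0 < deriv φ s ↔ s ∈ Ioo (-δ) δ)
    (hA3₂ : deriv φ δ = 0) (hA3₃ : φ δ = μs / μd)
    (hA3₄ : deriv (deriv φ) δ < 0)
    (hμs1 : 1 < μs) :
    (∃! a, a ∈ Ioo (-δ) δ ∧ μd * φ a = μs - 2) ∧
    (∃! b, b ∈ Ioo (-δ) δ ∧ φ b = μs / μd - 2) ∧
    (∀ a b, (a ∈ Ioo (-δ) δ ∧ μd * φ a = μs - 2) →
      (b ∈ Ioo (-δ) δ ∧ φ b = μs / μd - 2) → (a < b ↔ μd < 1)) := by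
  have hδδ : -δ ≤ δ := by linarith
  have hmono : StrictMonoOn φ (Icc (-δ) δ) := by
    apply strictMonoOn_of_deriv_pos (convex_Icc _ _) hφ.continuous.continuousOn
    intro x hx
    rw [interior_Icc] at hx
    exact (hA3₁ x).2 hx
  have hφmδ : φ (-δ) = -(μs / μd) := by rw [hA2, hA3₃]
  -- general solvability lemma
  have key : ∀ t : ℝ, -(μs / μd) < t → t < μs / μd → ∃! x, x ∈ Ioo (-δ) δ ∧ φ x = t := by
    intro t ht1 ht2
    obtain ⟨x, hx, hφx⟩ := intermediate_value_Icc hδδ hφ.continuous.continuousOn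
      (show t ∈ Icc (φ (-δ)) (φ δ) by rw [hφmδ, hA3₃]; exact ⟨ht1.le, ht2.le⟩)
    have hx' : x ∈ Ioo (-δ) δ := by
      rcases eq_or_lt_of_le hx.1 with h | h
      · exfalso; rw [← h, hφmδ] at hφx; linarith [hφx ▸ ht1]
      rcases eq_or_lt_of_le hx.2 with h2 | h2
      · exfalso; rw [h2, hA3₃] at hφx; linarith
      exact ⟨h, h2⟩
    refine ⟨x, ⟨hx', hφx⟩, ?_⟩
    rintro y ⟨hy, hφy⟩
    exact hmono.injOn (Ioo_subset_Icc_self hy) hx (by rw [hφy, hφx])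
  have hμd0 : μd ≠ 0 := ne_of_gt hμd
  have hb1 : -(μs / μd) < μs / μd - 2 := by
    have : 1 < μs / μd := hratio
    linarith
  have hb2 : μs / μd - 2 < μs / μd := by linarith
  have ha1 : -(μs / μd) < (μs - 2) / μd := by
    rw [neg_lt, ← neg_div, div_lt_div_iff_of_pos_right hμd]
    linarith
  have ha2 : (μs - 2) / μd < μs / μd := by
    rw [div_lt_div_iff_of_pos_right hμd]; linarith
  have keyA := key _ ha1 ha2
  have keyB := key _ hb1 hb2
  have heq : ∀ a : ℝ, μd * φ a = μs - 2 ↔ φ a = (μs - 2) / μd := by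
    intro a; rw [eq_div_iff hμd0]; constructor <;> intro h <;> linarith
  refine ⟨?_, keyB, ?_⟩
  · obtain ⟨a, ⟨ha, hφa⟩, hu⟩ := keyA
    exact ⟨a, ⟨ha, (heq a).2 hφa⟩, fun y ⟨hy, hφy⟩ => hu y ⟨hy, (heq y).1 hφy⟩⟩
  · rintro a b ⟨ha, hφa⟩ ⟨hb, hφb⟩
    rw [heq] at hφa
    have hlt : a < b ↔ φ a < φ b :=
      ⟨fun h => hmono (Ioo_subset_Icc_self ha) (Ioo_subset_Icc_self hb) h,
       fun h => by
        by_contra hab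
        push_neg at hab
        rcases eq_or_lt_of_le hab with h1 | h1
        · rw [h1] at h; exact lt_irrefl _ h
        · exact absurd (hmono (Ioo_subset_Icc_self hb) (Ioo_subset_Icc_self ha) h1)
            (not_lt.2 h.le)⟩
    rw [hlt, hφa, hφb]
    rw [div_sub' hμd0, div_lt_div_iff_of_pos_right hμd]
    constructor <;> intro h <;> nlinarith
end

section
/- Let α, β > 0 with 2α > β, and define φ(s) = (s/√(s² + 1))·(1 + α/(1 + β s²)) for s ∈ ℝ. Then φ is a well-defined, infinitely differentiable, odd function on ℝ; φ(s) → 1 as s → +∞; and φ satisfies assumption (A4) with k = 2: there exist s₀ > 0 and a smooth function φ₋ : [0, s₀] → ℝ with φ₋(0) = α/β − 1/2 > 0 such that φ(−1/s) = −1 − s² φ₋(s) for all s ∈ (0, s₀]. -/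
open Real Set Filter Topology

/-- the explicit regularization function
`φ(s) = (s/√(s²+1))(1 + α/(1+βs²))` with `α, β > 0`, `2α > β`, is smooth and odd,
tends to `1` at `+∞`, and satisfies (A4) with `k = 2` and `φ₋(0) = α/β - 1/2 > 0`. -/
theorem stmt_13 (α β : ℝ) (hα : 0 < α) (hβ : 0 < β) (hαβ : β < 2 * α)
    (φ : ℝ → ℝ)
    (hφdef : φ = fun s => s / Real.sqrt (s ^ 2 + 1) * (1 + α / (1 + β * s ^ 2))) :
    ContDiff ℝ (⊤ : ℕ∞) φ ∧
    (∀ s, φ (-s) = -φ s) ∧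
    Tendsto φ atTop (𝓝 1) ∧
    0 < α / β - 1 / 2 ∧
    ∃ s₀ > (0:ℝ), ∃ φm : ℝ → ℝ, ContDiffOn ℝ (⊤ : ℕ∞) φm (Icc 0 s₀) ∧
      φm 0 = α / β - 1 / 2 ∧
      ∀ s ∈ Ioc (0:ℝ) s₀, φ (-(1 / s)) = -1 - s ^ 2 * φm s := by
  have hsq : ∀ s : ℝ, (0:ℝ) < s ^ 2 + 1 := fun s => by positivity
  have hsqrt_pos : ∀ s : ℝ, (0:ℝ) < Real.sqrt (s ^ 2 + 1) := fun s =>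
    Real.sqrt_pos.mpr (hsq s)
  have hden : ∀ s : ℝ, (0:ℝ) < 1 + β * s ^ 2 := fun s => by positivity
  refine ⟨?_, ?_, ?_, ?_, ?_⟩
  · -- smoothness
    rw [hφdef]
    have h1 : ContDiff ℝ (⊤ : ℕ∞) fun s : ℝ => Real.sqrt (s ^ 2 + 1) := by
      apply ContDiff.sqrt
      · exact (contDiff_id.pow 2).add contDiff_const
      · exact fun x => (hsq x).ne'
    have h2 : ContDiff ℝ (⊤ : ℕ∞) fun s : ℝ => s / Real.sqrt (s ^ 2 + 1) :=
      contDiff_id.div h1 fun x => (hsqrt_pos x).ne'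
    have h3 : ContDiff ℝ (⊤ : ℕ∞) fun s : ℝ => 1 + α / (1 + β * s ^ 2) := by
      apply contDiff_const.add
      exact contDiff_const.div (contDiff_const.add (contDiff_const.mul (contDiff_id.pow 2)))
        fun x => (hden x).ne'
    exact h2.mul h3
  · -- odd
    intro s
    rw [hφdef]
    simp only [neg_sq]
    ring
  · -- tendsto 1
    rw [hφdef]
    have hA : Tendsto (fun s : ℝ => s / Real.sqrt (s ^ 2 + 1)) atTop (𝓝 1) := by
      have key : ∀ᶠ s : ℝ in atTop,
          s / Real.sqrt (s ^ 2 + 1) = 1 / Real.sqrt (1 + (s⁻¹) ^ 2) := by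
        filter_upwards [eventually_gt_atTop (0:ℝ)] with s hs
        have : s ^ 2 + 1 = s ^ 2 * (1 + (s⁻¹) ^ 2) := by field_simp
        rw [this, Real.sqrt_mul (by positivity), Real.sqrt_sq hs.le]
        rw [div_mul_eq_div_div]
        rw [div_self hs.ne']
      rw [tendsto_congr' key]
      have h1 : Tendsto (fun s : ℝ => 1 + (s⁻¹) ^ 2) atTop (𝓝 1) := by
        have := (tendsto_inv_atTop_zero (𝕜 := ℝ)).pow 2
        simpa using tendsto_const_nhds.add this
      have h2 : Tendsto (fun s : ℝ => Real.sqrt (1 + (s⁻¹) ^ 2)) atTop (𝓝 1) := by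
        have := (Real.continuous_sqrt.tendsto 1).comp h1
        simpa [Function.comp_def] using this
      simpa [one_div] using h2.inv₀ one_ne_zero
    have hB : Tendsto (fun s : ℝ => 1 + α / (1 + β * s ^ 2)) atTop (𝓝 1) := by
      have h1 : Tendsto (fun s : ℝ => 1 + β * s ^ 2) atTop atTop := by
        apply tendsto_atTop_add_const_left
        exact (tendsto_pow_atTop (two_ne_zero)).const_mul_atTop hβ
      have h2 : Tendsto (fun s : ℝ => α / (1 + β * s ^ 2)) atTop (𝓝 0) :=
        Tendsto.div_atTop tendsto_const_nhds h1
      simpa using tendsto_const_nhds.add h2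
    simpa using hA.mul hB
  · -- positivity
    rw [lt_sub_iff_add_lt, zero_add, div_lt_div_iff₀ (by norm_num) hβ]
    linarith
  · -- (A4)
    refine ⟨1, one_pos, fun s => α / ((s ^ 2 + β) * Real.sqrt (1 + s ^ 2))
      - 1 / ((Real.sqrt (1 + s ^ 2) + 1) * Real.sqrt (1 + s ^ 2)), ?_, ?_, ?_⟩
    · apply ContDiffOn.sub
      · apply ContDiffOn.div contDiffOn_const
        · apply ContDiffOn.mul
          · exact ((contDiff_id.pow 2).add contDiff_const).contDiffOn
          · apply ContDiffOn.sqrt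
            · exact (contDiff_const.add (contDiff_id.pow 2)).contDiffOn
            · intro x _; positivity
        · intro x _
          have h1 : (0:ℝ) < Real.sqrt (1 + x ^ 2) := Real.sqrt_pos.mpr (by positivity)
          positivity
      · apply ContDiffOn.div contDiffOn_const
        · apply ContDiffOn.mul
          · apply ContDiffOn.add _ contDiffOn_const
            apply ContDiffOn.sqrt (contDiff_const.add (contDiff_id.pow 2)).contDiffOn
            intro x _; positivity
          · apply ContDiffOn.sqrt (contDiff_const.add (contDiff_id.pow 2)).contDiffOn
            intro x _; positivity
        · intro x _
          have h1 : (0:ℝ) < Real.sqrt (1 + x ^ 2) := Real.sqrt_pos.mpr (by positivity)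
          positivity
    · norm_num
    · intro s hs
      obtain ⟨hs0, _⟩ := hs
      set r := Real.sqrt (1 + s ^ 2) with hr
      have hr0 : (0:ℝ) < r := Real.sqrt_pos.mpr (by positivity)
      have hr2 : r ^ 2 = 1 + s ^ 2 := Real.sq_sqrt (by positivity)
      have hs' : Real.sqrt ((-(1 / s)) ^ 2 + 1) = r / s := by
        rw [show (-(1 / s)) ^ 2 + 1 = (1 + s ^ 2) / s ^ 2 by field_simp,
          Real.sqrt_div (by positivity), Real.sqrt_sq hs0.le]
      rw [hφdef]
      have hsβ : (0:ℝ) < s ^ 2 + β := by positivity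
      have h1 : (1:ℝ) + β * (-(1 / s)) ^ 2 = (s ^ 2 + β) / s ^ 2 := by
        field_simp
      simp only [hs', h1]
      have hs2 : s ^ 2 = r ^ 2 - 1 := by linarith
      have hr1 : r + 1 ≠ 0 := by positivity
      have hr2' : r ^ 2 - 1 + β ≠ 0 := by
        have : (0:ℝ) ≤ r ^ 2 - 1 := by nlinarith [sq_nonneg s]
        positivity
      clear_value r
      rw [← hr]
      rw [hs2]
      field_simp
      ring
end
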